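/- Suppose R : G → ℝ is a continuous function on a nonempty open set G ⊊ ℝ^n such that 0 ≤ R(x) ≤ dist(x, ∂G) for every x ∈ G. Assume that f : G → ℝ has a continuous extension to ℝ^n. Then M_R(f) is a continuous function on G. -/

import Mathlib

open MeasureTheory Metric Set Filter
open scoped ENNReal Topology

noncomputable section

/-- `n`-dimensional Euclidean space. -/
abbrev En (n : ℕ) := EuclideanSpace ℝ (Fin n)

/-- The average of `|f|` over the open ball `B(x,r)`, with the convention that the
average over `B(x,0)` equals `|f x|`. -/
def ballAvg {n : ℕ} (f : En n → ℝ) (x : En n) (r : ℝ) : ℝ :=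
  if r = 0 then |f x| else ⨍ y in ball x r, |f y|

/-- The generalized local maximal operator `M_R`:
`M_R f x = sup { ⨍_{B(x,r)} |f| : 0 ≤ r ≤ R x }`. -/
def MR {n : ℕ} (R f : En n → ℝ) (x : En n) : ℝ :=
  sSup {a : ℝ | ∃ r, 0 ≤ r ∧ r ≤ R x ∧ a = ballAvg f x r}

namespace Statement16

variable {n : ℕ}

lemma nontrivial_En (hn : 1 ≤ n) : Nontrivial (En n) := by
  apply Module.nontrivial_of_finrank_pos (R := ℝ)
  rw [finrank_euclideanSpace_fin]
  omega

/-- Joint continuity of `(x, r) ↦ ∫_{B(x,r)} u`. -/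
lemma continuous_integral_ball (hn : 1 ≤ n) {u : En n → ℝ} (hu : Continuous u) :
    Continuous (fun p : En n × ℝ => ∫ y in ball p.1 p.2, u y) := by
  haveI : Nontrivial (En n) := nontrivial_En hn
  rw [continuous_iff_continuousAt]
  rintro ⟨x₀, r₀⟩
  have key : Tendsto (fun p : En n × ℝ => ∫ y, (ball p.1 p.2).indicator u y)
      (𝓝 (x₀, r₀)) (𝓝 (∫ y, (ball x₀ r₀).indicator u y)) := by
    apply tendsto_integral_filter_of_dominated_convergence
      (bound := (closedBall x₀ (|r₀| + 2)).indicator (fun y => |u y|))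
    · exact Eventually.of_forall fun p =>
        (hu.aestronglyMeasurable).indicator measurableSet_ball
    · have h1 : ∀ᶠ p : En n × ℝ in 𝓝 (x₀, r₀), dist p.1 x₀ < 1 := by
        have : ContinuousAt (fun p : En n × ℝ => dist p.1 x₀) (x₀, r₀) :=
          (continuous_fst.dist continuous_const).continuousAt
        exact this.eventually_lt continuousAt_const (by simpa using one_pos)
      have h2 : ∀ᶠ p : En n × ℝ in 𝓝 (x₀, r₀), p.2 < |r₀| + 1 := by
        have : ContinuousAt (fun p : En n × ℝ => p.2) (x₀, r₀) := continuous_snd.continuousAt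
        exact this.eventually_lt continuousAt_const
          (lt_of_le_of_lt (le_abs_self r₀) (lt_add_one _))
      filter_upwards [h1, h2] with p hp1 hp2
      refine Eventually.of_forall fun y => ?_
      by_cases hy : y ∈ ball p.1 p.2
      · have hyc : y ∈ closedBall x₀ (|r₀| + 2) := by
          have hd := mem_ball.1 hy
          have h3 : dist y x₀ < |r₀| + 2 := by
            calc dist y x₀ ≤ dist y p.1 + dist p.1 x₀ := dist_triangle _ _ _
              _ < p.2 + 1 := by linarith
              _ < |r₀| + 2 := by linarith
          exact mem_closedBall.2 h3.le
        simp [indicator_of_mem hy, indicator_of_mem hyc, Real.norm_eq_abs]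
      · simp only [indicator_of_notMem hy, norm_zero]
        exact indicator_nonneg (fun y _ => abs_nonneg _) y
    · rw [integrable_indicator_iff measurableSet_closedBall]
      exact hu.abs.continuousOn.integrableOn_compact (isCompact_closedBall _ _)
    · have hsph : ∀ᵐ y : En n, y ∉ sphere x₀ r₀ := by
        rw [← MeasureTheory.measure_eq_zero_iff_ae_notMem]
        exact Measure.addHaar_sphere volume x₀ r₀
      filter_upwards [hsph] with y hy
      rcases lt_or_gt_of_ne (fun h => hy (mem_sphere.2 h)) with h | h
      · have hev : ∀ᶠ p : En n × ℝ in 𝓝 (x₀, r₀), dist y p.1 < p.2 := by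
          have hc : ContinuousAt (fun p : En n × ℝ => dist y p.1) (x₀, r₀) :=
            (continuous_const.dist continuous_fst).continuousAt
          exact hc.eventually_lt continuous_snd.continuousAt h
        have : y ∈ ball x₀ r₀ := mem_ball.2 h
        rw [indicator_of_mem this]
        refine Tendsto.congr' ?_ tendsto_const_nhds
        filter_upwards [hev] with p hp
        exact (indicator_of_mem (mem_ball.2 hp) u).symm
      · have hev : ∀ᶠ p : En n × ℝ in 𝓝 (x₀, r₀), p.2 < dist y p.1 := by
          have hc : ContinuousAt (fun p : En n × ℝ => dist y p.1) (x₀, r₀) :=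
            (continuous_const.dist continuous_fst).continuousAt
          exact continuous_snd.continuousAt.eventually_lt hc h
        have : y ∉ ball x₀ r₀ := fun hmem => absurd (mem_ball.1 hmem) (not_lt.2 h.le)
        rw [indicator_of_notMem this]
        refine Tendsto.congr' ?_ tendsto_const_nhds
        filter_upwards [hev] with p hp
        exact (indicator_of_notMem (fun hmem => absurd (mem_ball.1 hmem) (not_lt.2 hp.le)) u).symm
  simp only [integral_indicator measurableSet_ball] at key
  exact key


/-- Joint continuity of the ball average on `{r ≥ 0}`. -/
lemma contOn_ballAvg (hn : 1 ≤ n) {g : En n → ℝ} (hg : Continuous g) :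
    ContinuousOn (fun p : En n × ℝ => ballAvg g p.1 p.2) (univ ×ˢ Ici 0) := by
  haveI : Nontrivial (En n) := nontrivial_En hn
  set c : ℝ := (volume (ball (0 : En n) 1)).toReal with hc
  have hcpos : 0 < c :=
    ENNReal.toReal_pos (measure_ball_pos volume _ one_pos).ne' measure_ball_lt_top.ne
  rintro ⟨x₀, r₀⟩ ⟨-, hr₀⟩
  rw [mem_Ici] at hr₀
  rcases hr₀.lt_or_eq with hpos | hzero
  · -- r₀ > 0
    apply ContinuousAt.continuousWithinAt
    have h2 : ContinuousAt
        (fun p : En n × ℝ => (p.2 ^ n * c)⁻¹ * ∫ y in ball p.1 p.2, |g y|) (x₀, r₀) := by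
      apply ContinuousAt.mul
      · exact (((continuous_snd.pow n).mul continuous_const).continuousAt).inv₀ (mul_pos (pow_pos hpos n) hcpos).ne'
      · exact (continuous_integral_ball hn hg.abs).continuousAt
    apply h2.congr
    have hev : ∀ᶠ p : En n × ℝ in 𝓝 (x₀, r₀), 0 < p.2 :=
      continuousAt_const.eventually_lt continuous_snd.continuousAt hpos
    filter_upwards [hev] with p hp
    rw [ballAvg, if_neg hp.ne', setAverage_eq, smul_eq_mul]
    congr 2
    rw [measureReal_def, Measure.addHaar_ball volume p.1 hp.le, ENNReal.toReal_mul,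
      ENNReal.toReal_ofReal (pow_nonneg hp.le _), finrank_euclideanSpace_fin]
  · -- r₀ = 0
    subst hzero
    rw [ContinuousWithinAt, show ballAvg g x₀ 0 = |g x₀| from if_pos rfl] at *
    rw [Metric.tendsto_nhdsWithin_nhds]
    intro ε hε
    obtain ⟨δ₁, hδ₁, hδ₁'⟩ := Metric.continuousAt_iff.1 (hg.abs.continuousAt) (ε / 2)
      (half_pos hε)
    refine ⟨δ₁ / 2, by positivity, ?_⟩
    rintro ⟨x, r⟩ ⟨-, hr⟩ hd
    rw [mem_Ici] at hr
    rw [Prod.dist_eq, max_lt_iff] at hd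
    obtain ⟨hdx, hdr⟩ := hd
    rw [Real.dist_eq, sub_zero, abs_of_nonneg hr] at hdr
    rcases hr.lt_or_eq with hrpos | hrzero
    · -- r > 0
      rw [show ballAvg g x r = ⨍ y in ball x r, |g y| from if_neg hrpos.ne']
      set m : ℝ := (volume (ball x r)).toReal with hm
      have hmpos : 0 < m :=
        ENNReal.toReal_pos (measure_ball_pos volume _ hrpos).ne' measure_ball_lt_top.ne
      have hball : ∀ y ∈ ball x r, |(|g y| - |g x₀|)| ≤ ε / 2 := by
        intro y hy
        have : dist y x₀ < δ₁ := by
          calc dist y x₀ ≤ dist y x + dist x x₀ := dist_triangle _ _ _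
            _ < r + δ₁ / 2 := by exact add_lt_add (mem_ball.1 hy) hdx
            _ < δ₁ := by linarith
        have := hδ₁' this
        rw [Real.dist_eq] at this
        exact this.le
      have hint : IntegrableOn (fun y => |g y|) (ball x r) volume :=
        (hg.abs.continuousOn.integrableOn_compact (isCompact_closedBall x r)).mono_set
          ball_subset_closedBall
      have hIc : ∫ y in ball x r, (|g y| - |g x₀|) =
          (∫ y in ball x r, |g y|) - |g x₀| * m := by
        rw [integral_sub hint (integrableOn_const measure_ball_lt_top.ne),
          setIntegral_const, smul_eq_mul]
        rw [hm, measureReal_def]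
        ring
      have hbd : |∫ y in ball x r, (|g y| - |g x₀|)| ≤ ε / 2 * m := by
        have := norm_setIntegral_le_of_norm_le_const (μ := volume) (s := ball x r)
          (f := fun y => |g y| - |g x₀|) measure_ball_lt_top
          (fun y hy => by simpa [Real.norm_eq_abs] using hball y hy)
        rw [measureReal_def, ← hm] at this
        simpa [Real.norm_eq_abs] using this
      rw [setAverage_eq, smul_eq_mul, Real.dist_eq, measureReal_def, ← hm]
      have heq : m⁻¹ * (∫ y in ball x r, |g y|) - |g x₀| =
          m⁻¹ * ((∫ y in ball x r, |g y|) - |g x₀| * m) := by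
        field_simp
      rw [heq, ← hIc, abs_mul, abs_inv, abs_of_pos hmpos]
      calc m⁻¹ * |∫ y in ball x r, (|g y| - |g x₀|)| ≤ m⁻¹ * (ε / 2 * m) := by
            exact mul_le_mul_of_nonneg_left hbd (by positivity)
        _ = ε / 2 := by field_simp
        _ < ε := by linarith
    · -- r = 0
      rw [show ballAvg g x r = |g x| from if_pos hrzero.symm]
      exact lt_of_lt_of_le (hδ₁' (lt_of_lt_of_le hdx (by linarith))) (by linarith)


/-- Continuity of a parametrized supremum over the compact interval `[0,1]`. -/
lemma contOn_sSup {F : En n × ℝ → ℝ} {s : Set (En n)} (hs : IsOpen s)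
    (hF : ContinuousOn F (s ×ˢ Icc 0 1)) :
    ContinuousOn (fun x => sSup ((fun t => F (x, t)) '' Icc 0 1)) s := by
  have cont : ∀ z ∈ s, ContinuousOn (fun t => F (z, t)) (Icc (0:ℝ) 1) := fun z hz =>
    hF.comp ((continuous_const.prodMk continuous_id).continuousOn) (fun t ht => ⟨hz, ht⟩)
  have bdd : ∀ z ∈ s, BddAbove ((fun t => F (z, t)) '' Icc (0:ℝ) 1) := fun z hz =>
    (isCompact_Icc.image_of_continuousOn (cont z hz)).bddAbove
  have hne : ∀ z : En n, ((fun t => F (z, t)) '' Icc (0:ℝ) 1).Nonempty :=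
    fun z => (nonempty_Icc.2 zero_le_one).image _
  intro x₀ hx₀
  rw [Metric.continuousWithinAt_iff]
  intro ε hε
  obtain ⟨ρ, hρ, hρs⟩ := Metric.isOpen_iff.1 hs x₀ hx₀
  set K := closedBall x₀ (ρ / 2) ×ˢ Icc (0:ℝ) 1 with hK
  have hKc : IsCompact K := (isCompact_closedBall _ _).prod isCompact_Icc
  have hKs : K ⊆ s ×ˢ Icc 0 1 :=
    prod_mono ((closedBall_subset_ball (by linarith)).trans hρs) le_rfl
  have hu := hKc.uniformContinuousOn_of_continuous (hF.mono hKs)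
  rw [Metric.uniformContinuousOn_iff] at hu
  obtain ⟨δ', hδ', hu⟩ := hu (ε / 2) (half_pos hε)
  refine ⟨min δ' (ρ / 2), by positivity, ?_⟩
  intro x hx hdx
  rw [lt_min_iff] at hdx
  have hxK : x ∈ closedBall x₀ (ρ / 2) := mem_closedBall.2 hdx.2.le
  have hx₀K : x₀ ∈ closedBall x₀ (ρ / 2) := mem_closedBall_self (by positivity)
  have key : ∀ t ∈ Icc (0:ℝ) 1, |F (x, t) - F (x₀, t)| ≤ ε / 2 := by
    intro t ht
    have hd : dist ((x, t) : En n × ℝ) (x₀, t) < δ' := by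
      rw [Prod.dist_eq]
      simp only [dist_self]
      exact max_lt hdx.1 hδ'
    have := hu (x, t) ⟨hxK, ht⟩ (x₀, t) ⟨hx₀K, ht⟩ hd
    rw [Real.dist_eq] at this
    exact this.le
  have h1 : sSup ((fun t => F (x, t)) '' Icc 0 1) ≤
      sSup ((fun t => F (x₀, t)) '' Icc 0 1) + ε / 2 := by
    apply csSup_le (hne x)
    rintro a ⟨t, ht, rfl⟩
    have h := abs_le.1 (key t ht)
    have := le_csSup (bdd x₀ hx₀) (mem_image_of_mem _ ht)
    linarith [this]
  have h2 : sSup ((fun t => F (x₀, t)) '' Icc 0 1) ≤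
      sSup ((fun t => F (x, t)) '' Icc 0 1) + ε / 2 := by
    apply csSup_le (hne x₀)
    rintro a ⟨t, ht, rfl⟩
    have h := abs_le.1 (key t ht)
    have := le_csSup (bdd x hx) (mem_image_of_mem _ ht)
    linarith [this]
  rw [Real.dist_eq, abs_sub_lt_iff]
  constructor <;> linarith

end Statement16

/-- Lemma `l.continuity`: if `R` is continuous on a proper nonempty open set `G ⊊ ℝ^n` with
`0 ≤ R ≤ dist(·, ∂G)`, and `f : G → ℝ` extends continuously to `ℝ^n`, then
`M_R(f) = M_R(f χ_G)` is continuous on `G`. -/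
theorem statement16 (n : ℕ) (hn : 1 ≤ n) (G : Set (En n)) (hGo : IsOpen G)
    (hGne : G.Nonempty) (hGproper : G ≠ univ)
    (R : En n → ℝ) (hRcont : ContinuousOn R G)
    (hR : ∀ x ∈ G, 0 ≤ R x ∧ ENNReal.ofReal (R x) ≤ EMetric.infEdist x (frontier G))
    (f : En n → ℝ) (hf : ∃ g : En n → ℝ, Continuous g ∧ ∀ x ∈ G, g x = f x) :
    ContinuousOn (MR R (G.indicator f)) G := by
  obtain ⟨g, hg, hgf⟩ := hf
  have hfrne : (frontier G).Nonempty := nonempty_frontier_iff.2 ⟨hGne, hGproper⟩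
  -- balls of radius `R x` are contained in `G`
  have hsub : ∀ x ∈ G, ball x (R x) ⊆ G := by
    intro x hx
    obtain ⟨hR0, hRle⟩ := hR x hx
    have hRle' : R x ≤ infDist x (frontier G) := by
      have h := ENNReal.toReal_mono (Metric.infEdist_ne_top hfrne) hRle
      rwa [ENNReal.toReal_ofReal hR0] at h
    rcases hR0.lt_or_eq with hpos | heq
    · have hdisj : ball x (R x) ⊆ (frontier G)ᶜ :=
        (disjoint_ball_infDist.mono_left (ball_subset_ball hRle')).subset_compl_right
      have hconn : IsPreconnected (ball x (R x)) := (convex_ball x (R x)).isPreconnected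
      have hcover : ball x (R x) ⊆ G ∪ interior Gᶜ := by
        intro y hy
        by_cases hyc : y ∈ closure G
        · left
          by_contra hyG
          exact hdisj hy (hGo.frontier_eq ▸ ⟨hyc, hyG⟩)
        · right
          rw [interior_compl]
          exact hyc
      exact hconn.subset_left_of_subset_union hGo isOpen_interior
        (disjoint_compl_right.mono_right interior_subset) hcover
        ⟨x, mem_ball_self hpos, hx⟩
    · rw [← heq, ball_zero]
      exact empty_subset _
  -- on admissible radii, the indicator average agrees with the average of `g`
  have hcongr : ∀ x ∈ G, ∀ r, 0 ≤ r → r ≤ R x →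
      ballAvg (G.indicator f) x r = ballAvg g x r := by
    intro x hx r hr0 hrR
    rcases hr0.lt_or_eq with hpos | hzero
    · have hsubG : ball x r ⊆ G := (ball_subset_ball hrR).trans (hsub x hx)
      rw [ballAvg, ballAvg, if_neg hpos.ne', if_neg hpos.ne', setAverage_eq, setAverage_eq]
      congr 1
      apply setIntegral_congr_fun measurableSet_ball
      intro y hy
      have hyG := hsubG hy
      simp [indicator_of_mem hyG, ← hgf y hyG]
    · rw [← hzero, ballAvg, ballAvg, if_pos rfl, if_pos rfl, indicator_of_mem hx,
        hgf x hx]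
  -- the defining set of `MR` is the image of `[0,1]`
  have hset : ∀ x ∈ G, {a : ℝ | ∃ r, 0 ≤ r ∧ r ≤ R x ∧ a = ballAvg (G.indicator f) x r}
      = (fun t => ballAvg g x (t * R x)) '' Icc 0 1 := by
    intro x hx
    have hR0 := (hR x hx).1
    ext a
    simp only [mem_setOf_eq, mem_image, mem_Icc]
    constructor
    · rintro ⟨r, hr0, hrR, rfl⟩
      rcases hR0.lt_or_eq with hRpos | hRz
      · refine ⟨r / R x, ⟨div_nonneg hr0 hR0, (div_le_one hRpos).2 hrR⟩, ?_⟩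
        rw [div_mul_cancel₀ _ hRpos.ne', hcongr x hx r hr0 hrR]
      · have hrz : r = 0 := le_antisymm (hrR.trans hRz.ge) hr0
        refine ⟨0, ⟨le_refl 0, zero_le_one⟩, ?_⟩
        rw [zero_mul, ← hrz, hcongr x hx r hr0 hrR]
    · rintro ⟨t, ⟨ht0, ht1⟩, rfl⟩
      have h1 : 0 ≤ t * R x := mul_nonneg ht0 hR0
      have h2 : t * R x ≤ R x := by nlinarith
      exact ⟨t * R x, h1, h2, (hcongr x hx _ h1 h2).symm⟩
  -- joint continuity of the reparametrized averages
  have hF : ContinuousOn (fun p : En n × ℝ => ballAvg g p.1 (p.2 * R p.1))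
      (G ×ˢ Icc 0 1) := by
    have hm : ContinuousOn (fun p : En n × ℝ => (p.1, p.2 * R p.1)) (G ×ˢ Icc 0 1) := by
      apply ContinuousOn.prodMk continuous_fst.continuousOn
      exact continuous_snd.continuousOn.mul
        (hRcont.comp continuous_fst.continuousOn (fun p hp => hp.1))
    exact (Statement16.contOn_ballAvg hn hg).comp hm
      (fun p hp => ⟨mem_univ _, mem_Ici.2 (mul_nonneg hp.2.1 (hR p.1 hp.1).1)⟩)
  apply (Statement16.contOn_sSup hGo hF).congr
  intro x hx
  rw [MR, hset x hx]
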